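/- Suppose u: ℤ² → ℝ are discrete conformal factors of a locally univalent circle packing of the hexagonal lattice (i.e., the angle-sum equation Σ_{T ∋ v} θ_v^T(u) = 2π holds at every vertex, with radii e^{u}). Define edge weights η_{vw} = Σ_{T ∈ F_{v,w}} ∫₀¹ (∂θ_v/∂u_w)(f_T(t)) dt, where f_T(t) linearly interpolates between the conformal factors of T and of its horizontal translate R(T). Then D1u (the horizontal difference of u) is a discrete harmonic function on the hexagonal graph with weights η: for every vertex v, Σ_{w∼v} η_{vw}(D1u_w − D1u_v) = 0. -/

import Mathlib

open Real

/-- Inner angle at the vertex of radius `a` in the triangle with side lengths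
`a+b, a+c, b+c` formed by three mutually externally tangent circles. -/
noncomputable def ang (a b c : ℝ) : ℝ :=
  Real.arccos (((a + b) ^ 2 + (a + c) ^ 2 - (b + c) ^ 2) / (2 * (a + b) * (a + c)))

/-- The six neighbor displacements of the hexagonal lattice, in cyclic order. -/
def d : Fin 6 → ℤ × ℤ := ![(1, 0), (0, 1), (-1, 1), (-1, 0), (0, -1), (1, -1)]

/-- The horizontal translation unit. -/
def e1 : ℤ × ℤ := (1, 0)

/-- The angle-sum condition at vertex `v` for log-radii `u`: the six inner angles
at `v` in the six incident faces sum to `2π`. -/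
noncomputable def angleSum (u : ℤ × ℤ → ℝ) (v : ℤ × ℤ) : ℝ :=
  ∑ i : Fin 6,
    ang (Real.exp (u v)) (Real.exp (u (v + d i))) (Real.exp (u (v + d (i + 1))))

/-- `∂θ_v/∂u_w` of the inner angle at the vertex of log-radius `a` in the face whose
other log-radii are `b` (the differentiation variable) and `c`. -/
noncomputable def pd (a b c : ℝ) : ℝ :=
  deriv (fun s => ang (Real.exp a) (Real.exp s) (Real.exp c)) b

/-- Linear interpolation `f_T(t)` between the conformal factor at `v` and at its
horizontal translate `v + e1`. -/
noncomputable def P (u : ℤ × ℤ → ℝ) (v : ℤ × ℤ) (t : ℝ) : ℝ :=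
  (1 - t) * u v + t * u (v + e1)

/-- The weight `η_{vw}` of the edge `{v,w}`, where `z1, z2` are the third vertices of
the two faces containing the edge: the sum over these faces of
`∫₀¹ (∂θ_v/∂u_w)(f_T(t)) dt`. -/
noncomputable def eta (u : ℤ × ℤ → ℝ) (v w z1 z2 : ℤ × ℤ) : ℝ :=
  (∫ t in (0:ℝ)..1, pd (P u v t) (P u w t) (P u z1 t)) +
  (∫ t in (0:ℝ)..1, pd (P u v t) (P u w t) (P u z2 t))

/-- The horizontal difference operator `D1`. -/
noncomputable def D1 (u : ℤ × ℤ → ℝ) (v : ℤ × ℤ) : ℝ := u (v + e1) - u v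

/-!
Follow the linear interpolation `P u` from `u` to its translate `u ∘ R`. In each face at `v`,
the angle at `v` depends only on differences of log-radii (scale invariance), so its
`t`-derivative is `(D1 u w - D1 u v) ∂θ_v/∂u_w + (D1 u z - D1 u v) ∂θ_v/∂u_z`, and the
fundamental theorem of calculus expresses the change of the angle as the integral of this.
Summed over the six faces at `v`, each edge `{v, w}` collects the integrals of its two faces,
i.e. `η_{vw} (D1 u w - D1 u v)`, while the total change is the difference of the angle sums at
`R v` and `v`, both equal to `2π`.
-/

noncomputable def angExp (p : ℝ × ℝ × ℝ) : ℝ :=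
  ang (Real.exp p.1) (Real.exp p.2.1) (Real.exp p.2.2)

lemma ang_swap (a b c : ℝ) : ang a b c = ang a c b := by
  unfold ang; ring_nf

lemma ang_mul_mul_mul {k : ℝ} (hk : k ≠ 0) (a b c : ℝ) :
    ang (k * a) (k * b) (k * c) = ang a b c := by
  unfold ang
  congr 1
  rw [show (k * a + k * b) ^ 2 + (k * a + k * c) ^ 2 - (k * b + k * c) ^ 2 =
      k ^ 2 * ((a + b) ^ 2 + (a + c) ^ 2 - (b + c) ^ 2) by ring,
    show 2 * (k * a + k * b) * (k * a + k * c) = k ^ 2 * (2 * (a + b) * (a + c)) by ring]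
  exact mul_div_mul_left _ _ (pow_ne_zero 2 hk)

lemma ang_arg_mem_Ioo {a b c : ℝ} (ha : 0 < a) (hb : 0 < b) (hc : 0 < c) :
    ((a + b) ^ 2 + (a + c) ^ 2 - (b + c) ^ 2) / (2 * (a + b) * (a + c)) ∈ Set.Ioo (-1) 1 := by
  have hden : 0 < 2 * (a + b) * (a + c) := by positivity
  constructor
  · rw [lt_div_iff₀ hden]; nlinarith
  · rw [div_lt_one hden]; nlinarith

lemma contDiff_angExp : ContDiff ℝ 1 angExp := by
  set q : ℝ × ℝ × ℝ → ℝ := fun p =>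
    ((Real.exp p.1 + Real.exp p.2.1) ^ 2 + (Real.exp p.1 + Real.exp p.2.2) ^ 2
      - (Real.exp p.2.1 + Real.exp p.2.2) ^ 2) /
      (2 * (Real.exp p.1 + Real.exp p.2.1) * (Real.exp p.1 + Real.exp p.2.2))
  have hq : ContDiff ℝ 1 q := ContDiff.div (by fun_prop) (by fun_prop) fun p => by positivity
  rw [contDiff_iff_contDiffAt]
  intro p
  obtain ⟨hgt, hlt⟩ := ang_arg_mem_Ioo (exp_pos p.1) (exp_pos p.2.1) (exp_pos p.2.2)
  exact (contDiffAt_arccos hgt.ne' hlt.ne).comp p hq.contDiffAt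

lemma differentiable_angExp : Differentiable ℝ angExp :=
  contDiff_angExp.differentiable one_ne_zero

lemma continuous_fderiv_angExp : Continuous (fderiv ℝ angExp) :=
  contDiff_angExp.continuous_fderiv one_ne_zero

lemma angExp_add_const (p : ℝ × ℝ × ℝ) (s : ℝ) : angExp (p + (s, s, s)) = angExp p := by
  simp only [angExp, Prod.fst_add, Prod.snd_add, Real.exp_add, mul_comm _ (Real.exp s)]
  exact ang_mul_mul_mul (exp_pos s).ne' _ _ _

/-- `∑_j ∂θ_i/∂u_j = 0`, by scale invariance of the angle. -/
lemma fderiv_angExp_apply_one_one_one (p : ℝ × ℝ × ℝ) : fderiv ℝ angExp p (1, 1, 1) = 0 := by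
  rw [← (differentiable_angExp p).lineDeriv_eq_fderiv, lineDeriv]
  simp only [Prod.smul_mk, smul_eq_mul, mul_one, angExp_add_const, deriv_const]

lemma pd_eq_fderiv_angExp (a b c : ℝ) : pd a b c = fderiv ℝ angExp (a, b, c) (0, 1, 0) := by
  have hline : HasDerivAt (fun s : ℝ => ((a, s, c) : ℝ × ℝ × ℝ)) (0, 1, 0) b :=
    (hasDerivAt_const b a).prodMk ((hasDerivAt_id b).prodMk (hasDerivAt_const b c))
  exact ((differentiable_angExp _).hasFDerivAt.comp_hasDerivAt b hline).deriv

lemma pd_swap_eq_fderiv_angExp (a b c : ℝ) :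
    pd a c b = fderiv ℝ angExp (a, b, c) (0, 0, 1) := by
  have hline : HasDerivAt (fun s : ℝ => ((a, b, s) : ℝ × ℝ × ℝ)) (0, 0, 1) c :=
    (hasDerivAt_const c a).prodMk ((hasDerivAt_const c b).prodMk (hasDerivAt_id c))
  rw [← ((differentiable_angExp _).hasFDerivAt.comp_hasDerivAt c hline).deriv, pd]
  simp only [Function.comp_def, angExp, ang_swap (Real.exp a) (Real.exp b)]

lemma fderiv_angExp_apply (a b c x y z : ℝ) :
    fderiv ℝ angExp (a, b, c) (x, y, z) = (y - x) * pd a b c + (z - x) * pd a c b := by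
  have hdecomp : ((x, y, z) : ℝ × ℝ × ℝ) = x • ((1, 1, 1) : ℝ × ℝ × ℝ)
      + (y - x) • ((0, 1, 0) : ℝ × ℝ × ℝ) + (z - x) • ((0, 0, 1) : ℝ × ℝ × ℝ) := by
    simp only [Prod.smul_mk, Prod.mk_add_mk, smul_eq_mul, Prod.mk.injEq]
    refine ⟨by ring, by ring, by ring⟩
  rw [hdecomp, map_add, map_add, map_smul, map_smul, map_smul, fderiv_angExp_apply_one_one_one,
    pd_eq_fderiv_angExp, pd_swap_eq_fderiv_angExp, smul_eq_mul, smul_eq_mul, smul_eq_mul,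
    mul_zero, zero_add]

section Interpolation

variable (u : ℤ × ℤ → ℝ)

lemma hasDerivAt_P (w : ℤ × ℤ) (t : ℝ) : HasDerivAt (P u w) (D1 u w) t := by
  have hP : P u w = fun t => u w + t * D1 u w := funext fun t => by simp only [P, D1]; ring
  rw [hP]
  simpa using ((hasDerivAt_id t).mul_const (D1 u w)).const_add (u w)

lemma continuous_P (w : ℤ × ℤ) : Continuous (P u w) := by
  unfold P; fun_prop

lemma continuous_pd_P (a b c : ℤ × ℤ) : Continuous fun t => pd (P u a t) (P u b t) (P u c t) := by
  simp_rw [pd_eq_fderiv_angExp]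
  exact (continuous_fderiv_angExp.comp ((continuous_P u a).prodMk
    ((continuous_P u b).prodMk (continuous_P u c)))).clm_apply continuous_const

lemma ang_shift_sub_ang_eq_integral (a b c : ℤ × ℤ) :
    (D1 u b - D1 u a) * (∫ t in (0:ℝ)..1, pd (P u a t) (P u b t) (P u c t)) +
      (D1 u c - D1 u a) * (∫ t in (0:ℝ)..1, pd (P u a t) (P u c t) (P u b t)) =
    ang (Real.exp (u (a + e1))) (Real.exp (u (b + e1))) (Real.exp (u (c + e1))) -
      ang (Real.exp (u a)) (Real.exp (u b)) (Real.exp (u c)) := by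
  have hderiv : ∀ t, HasDerivAt (fun t => angExp (P u a t, P u b t, P u c t))
      ((D1 u b - D1 u a) * pd (P u a t) (P u b t) (P u c t) +
        (D1 u c - D1 u a) * pd (P u a t) (P u c t) (P u b t)) t := fun t => by
    rw [← fderiv_angExp_apply]
    exact (differentiable_angExp _).hasFDerivAt.comp_hasDerivAt t
      ((hasDerivAt_P u a t).prodMk ((hasDerivAt_P u b t).prodMk (hasDerivAt_P u c t)))
  have hint : ∀ x y z : ℤ × ℤ,
      IntervalIntegrable (fun t => pd (P u x t) (P u y t) (P u z t)) MeasureTheory.volume 0 1 :=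
    fun x y z => (continuous_pd_P u x y z).intervalIntegrable 0 1
  rw [← intervalIntegral.integral_const_mul, ← intervalIntegral.integral_const_mul,
    ← intervalIntegral.integral_add ((hint _ _ _).const_mul _) ((hint _ _ _).const_mul _),
    intervalIntegral.integral_eq_sub_of_hasDerivAt (fun t _ => hderiv t)
      (((hint _ _ _).const_mul _).add ((hint _ _ _).const_mul _))]
  simp [angExp, P]

end Interpolation

/-- `D1 u` is discrete harmonic for the weights `η`: at each vertex `v`, the weighted
sum of differences of `D1 u` over the six neighbors vanishes. -/
theorem stmt_16 (u : ℤ × ℤ → ℝ)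
    (hpack : ∀ v : ℤ × ℤ, angleSum u v = 2 * Real.pi) :
    ∀ v : ℤ × ℤ,
      ∑ i : Fin 6,
        eta u v (v + d i) (v + d (i - 1)) (v + d (i + 1)) *
          (D1 u (v + d i) - D1 u v) = 0 := by
  intro v
  set I : ℤ × ℤ → ℤ × ℤ → ℝ := fun w z => ∫ t in (0:ℝ)..1, pd (P u v t) (P u w t) (P u z t)
  set c : Fin 6 → ℝ := fun i => D1 u (v + d i) - D1 u v
  have hfaces : ∑ i : Fin 6, (c i * I (v + d i) (v + d (i + 1)) +
      c (i + 1) * I (v + d (i + 1)) (v + d i)) = angleSum u (v + e1) - angleSum u v := by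
    simp only [c, I, ang_shift_sub_ang_eq_integral, angleSum, ← Finset.sum_sub_distrib,
      add_right_comm v e1]
  have hreindex : ∑ i : Fin 6, c (i + 1) * I (v + d (i + 1)) (v + d i) =
      ∑ i : Fin 6, c i * I (v + d i) (v + d (i - 1)) :=
    Fintype.sum_equiv (Equiv.addRight 1) _ _ fun i => by simp
  rw [hpack, hpack, sub_self, Finset.sum_add_distrib, hreindex] at hfaces
  calc _ = ∑ i : Fin 6, c i * I (v + d i) (v + d (i + 1)) +
        ∑ i : Fin 6, c i * I (v + d i) (v + d (i - 1)) := by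
        simp only [eta, c, I, ← Finset.sum_add_distrib]
        exact Finset.sum_congr rfl fun i _ => by ring
    _ = 0 := hfaces
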